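/- Let Σ_0 be the 12 × 12 SEM-implied covariance structure built from Λ_{1,0} = (1, 0.5, 0.8, 0.3)^T ∈ ℝ^{4×1}, Λ_{2,0} ∈ ℝ^{8×2} with first column (1, 1.3, 0.8, 0.5, 0, 0, 0, 0)^T and second column (0, 0, 0, 0, 1, 0.9, 0.7, 1.1)^T, Γ_0 = (−0.6, 0.9)^T ∈ ℝ^{2×1}, Σ_ξξ,0 = 0.64 (a 1 × 1 matrix), Σ_δδ,0 = diag(0.36, 1.44, 0.64, 0.49), Σ_εε,0 = diag(1.69, 0.25, 0.49, 0.36, 0.81, 0.64, 1.44, 1.21), and Σ_ζζ,0 = diag(1.96, 0.36). Consider Model 3: for θ = (θ^{(1)}, ..., θ^{(25)}) in Θ_3 = [(−100,0) ∪ (0,100)]^{11} × (0.01,100)^{14} ⊂ ℝ^{25}, let Σ_3(θ) be the SEM-implied covariance structure with Λ_1 = (1, θ^{(1)}, θ^{(2)}, θ^{(3)})^T ∈ ℝ^{4×1}, Λ_2 = (1, θ^{(4)}, θ^{(5)}, θ^{(6)}, θ^{(7)}, θ^{(8)}, θ^{(9)}, θ^{(10)})^T ∈ ℝ^{8×1},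 Γ = θ^{(11)} (1 × 1), Σ_ξξ = θ^{(12)}, Σ_δδ = diag(θ^{(13)}, θ^{(14)}, θ^{(15)}, θ^{(16)}), Σ_εε = diag(θ^{(17)}, ..., θ^{(24)}), and Σ_ζζ = θ^{(25)} (1 × 1). Then Σ_3(θ_3) ≠ Σ_0 for every θ_3 ∈ Θ_3; that is, Model 3 is misspecified. -/

import Mathlib

open Matrix

/-- The SEM-implied covariance structure: given loading matrices `L1 : p1 × k1`,
`L2 : p2 × k2`, `G : k2 × k1` (with `Ψ = I`, i.e. `B = 0`) and covariance matrices
`Sxx, Sdd, See, Szz`, it is the block matrix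
`[[L1 Sxx L1ᵀ + Sdd, L1 Sxx Gᵀ L2ᵀ], [(L1 Sxx Gᵀ L2ᵀ)ᵀ, L2 (G Sxx Gᵀ + Szz) L2ᵀ + See]]`. -/
noncomputable def semCov {p1 p2 k1 k2 : ℕ}
    (L1 : Matrix (Fin p1) (Fin k1) ℝ) (L2 : Matrix (Fin p2) (Fin k2) ℝ)
    (G : Matrix (Fin k2) (Fin k1) ℝ)
    (Sxx : Matrix (Fin k1) (Fin k1) ℝ) (Sdd : Matrix (Fin p1) (Fin p1) ℝ)
    (See : Matrix (Fin p2) (Fin p2) ℝ) (Szz : Matrix (Fin k2) (Fin k2) ℝ) :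
    Matrix (Fin p1 ⊕ Fin p2) (Fin p1 ⊕ Fin p2) ℝ :=
  Matrix.fromBlocks (L1 * Sxx * L1ᵀ + Sdd) (L1 * Sxx * Gᵀ * L2ᵀ)
    (L1 * Sxx * Gᵀ * L2ᵀ)ᵀ (L2 * (G * Sxx * Gᵀ + Szz) * L2ᵀ + See)

/-- The true implied covariance matrix `Σ₀` (with `p₁ = 4, p₂ = 8, k₁ = 1, k₂ = 2`). -/
noncomputable def Sigma0 : Matrix (Fin 4 ⊕ Fin 8) (Fin 4 ⊕ Fin 8) ℝ :=
  semCov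
    (Matrix.of fun i (_ : Fin 1) => ![1, 0.5, 0.8, 0.3] i)
    (Matrix.of fun (i : Fin 8) (j : Fin 2) =>
      ![![1, 0], ![1.3, 0], ![0.8, 0], ![0.5, 0],
        ![0, 1], ![0, 0.9], ![0, 0.7], ![0, 1.1]] i j)
    (Matrix.of fun (i : Fin 2) (_ : Fin 1) => ![-0.6, 0.9] i)
    (Matrix.of fun (_ _ : Fin 1) => (0.64 : ℝ))
    (Matrix.diagonal ![0.36, 1.44, 0.64, 0.49])
    (Matrix.diagonal ![1.69, 0.25, 0.49, 0.36, 0.81, 0.64, 1.44, 1.21])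
    (Matrix.diagonal ![1.96, 0.36])

/-- The implied covariance structure of Model 3 (with `k₂ = 1`), with parameter
`θ = (θ^(1), …, θ^(25))` (0-indexed as `θ 0, …, θ 24`). -/
noncomputable def Sigma3 (θ : Fin 25 → ℝ) : Matrix (Fin 4 ⊕ Fin 8) (Fin 4 ⊕ Fin 8) ℝ :=
  semCov
    (Matrix.of fun i (_ : Fin 1) => ![1, θ 0, θ 1, θ 2] i)
    (Matrix.of fun (i : Fin 8) (_ : Fin 1) =>
      ![1, θ 3, θ 4, θ 5, θ 6, θ 7, θ 8, θ 9] i)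
    (Matrix.of fun (_ _ : Fin 1) => θ 10)
    (Matrix.of fun (_ _ : Fin 1) => θ 11)
    (Matrix.diagonal ![θ 12, θ 13, θ 14, θ 15])
    (Matrix.diagonal ![θ 16, θ 17, θ 18, θ 19, θ 20, θ 21, θ 22, θ 23])
    (Matrix.of fun (_ _ : Fin 1) => θ 24)

/-- The parameter space `Θ₃ = [(−100,0) ∪ (0,100)]^{11} × (0.01,100)^{14}` of Model 3. -/
def Theta3 : Set (Fin 25 → ℝ) :=
  {θ | (∀ i : Fin 25, (i : ℕ) < 11 →
          θ i ∈ Set.Ioo (-100 : ℝ) 0 ∪ Set.Ioo (0 : ℝ) 100) ∧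
       (∀ i : Fin 25, 11 ≤ (i : ℕ) → θ i ∈ Set.Ioo (0.01 : ℝ) 100)}

/-!
In a one-factor measurement model the off-diagonal entries of the indicator covariance are those
of a rank-one matrix, so any three distinct indicators `a, i, j` satisfy the triad relation
`σ_ai σ_aj = φ σ_ij` with `φ` depending only on `a`. In `Σ₀` the endogenous indicators load on two
correlated factors, and the triads `(0, 1, 2)` and `(0, 4, 5)` force the incompatible values
`φ = 2.1904` and `φ = 0.3456² / 0.8784`.
-/

theorem Matrix.mul_mul_transpose_mul_eq_of_unique {m k R : Type*} [Fintype k] [Unique k]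
    [CommRing R] (L : Matrix m k R) (Φ : Matrix k k R) (a i j : m) :
    (L * Φ * Lᵀ) a i * (L * Φ * Lᵀ) a j = (L * Φ * Lᵀ) a a * (L * Φ * Lᵀ) i j := by
  simp only [mul_apply, Fintype.sum_unique, transpose_apply]
  ring

section semCov

variable {p1 p2 k1 k2 : ℕ} (L1 : Matrix (Fin p1) (Fin k1) ℝ) (Sxx : Matrix (Fin k1) (Fin k1) ℝ)
  (Sdd : Matrix (Fin p1) (Fin p1) ℝ) (d : Fin p2 → ℝ)

theorem semCov_inr_inr_of_ne (L2 : Matrix (Fin p2) (Fin k2) ℝ) (G : Matrix (Fin k2) (Fin k1) ℝ)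
    (Szz : Matrix (Fin k2) (Fin k2) ℝ) {i j : Fin p2} (hij : i ≠ j) :
    semCov L1 L2 G Sxx Sdd (diagonal d) Szz (.inr i) (.inr j) =
      (L2 * (G * Sxx * Gᵀ + Szz) * L2ᵀ) i j := by
  simp [semCov, hij]

theorem semCov_inr_mul_inr_of_one_factor (L2 : Matrix (Fin p2) (Fin 1) ℝ)
    (G : Matrix (Fin 1) (Fin k1) ℝ) (Szz : Matrix (Fin 1) (Fin 1) ℝ) {a i j : Fin p2}
    (hai : a ≠ i) (haj : a ≠ j) (hij : i ≠ j) :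
    semCov L1 L2 G Sxx Sdd (diagonal d) Szz (.inr a) (.inr i) *
        semCov L1 L2 G Sxx Sdd (diagonal d) Szz (.inr a) (.inr j) =
      (L2 * (G * Sxx * Gᵀ + Szz) * L2ᵀ) a a *
        semCov L1 L2 G Sxx Sdd (diagonal d) Szz (.inr i) (.inr j) := by
  rw [semCov_inr_inr_of_ne _ _ _ _ _ _ _ hai, semCov_inr_inr_of_ne _ _ _ _ _ _ _ haj,
    semCov_inr_inr_of_ne _ _ _ _ _ _ _ hij]
  exact mul_mul_transpose_mul_eq_of_unique _ _ a i j

end semCov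

theorem Sigma3_triad (θ : Fin 25 → ℝ) :
    ∃ φ : ℝ, ∀ {i j : Fin 8}, 0 ≠ i → 0 ≠ j → i ≠ j →
      Sigma3 θ (.inr 0) (.inr i) * Sigma3 θ (.inr 0) (.inr j) = φ * Sigma3 θ (.inr i) (.inr j) :=
  ⟨_, semCov_inr_mul_inr_of_one_factor _ _ _ _ _ _ _⟩

theorem Sigma0_inr_inr_entries :
    Sigma0 (.inr 0) (.inr 1) = 2.84752 ∧ Sigma0 (.inr 0) (.inr 2) = 1.75232 ∧
      Sigma0 (.inr 1) (.inr 2) = 2.278016 ∧ Sigma0 (.inr 0) (.inr 4) = -0.3456 ∧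
      Sigma0 (.inr 0) (.inr 5) = -0.31104 ∧ Sigma0 (.inr 4) (.inr 5) = 0.79056 := by
  simp [Sigma0, semCov_inr_inr_of_ne, mul_apply, Fin.sum_univ_succ]
  norm_num

/-- Model 3 is misspecified: `Σ₃(θ₃) ≠ Σ₀` for every `θ₃ ∈ Θ₃`. -/
theorem model3_misspecified : ∀ θ3 ∈ Theta3, Sigma3 θ3 ≠ Sigma0 := by
  intro θ _ h
  obtain ⟨φ, triad⟩ := Sigma3_triad θ
  have triad₁₂ := triad (i := 1) (j := 2) (by decide) (by decide) (by decide)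
  have triad₄₅ := triad (i := 4) (j := 5) (by decide) (by decide) (by decide)
  obtain ⟨s01, s02, s12, s04, s05, s45⟩ := Sigma0_inr_inr_entries
  rw [h, s01, s02, s12] at triad₁₂
  rw [h, s04, s05, s45] at triad₄₅
  linarith
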